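/- Fix d ≥ 2, arbitrary labels y_2,…,y_d ∈ {1,-1}, the test set Z_test = {(e_1,1)}, the training family Z_train = {(e_i, y_i) : i = 2,…,d} ∪ {(e_1,1), (-e_1,1)} of size n = d+1, and the target sample z_target = (e_1,1). Then for every θ ∈ ℝ^d, the influence of the target sample satisfies I_θ(z_target, Z_test) = -((d+1)/2)·exp(-θ_1); in particular I_θ(z_target, Z_test) < 0 for every θ ∈ ℝ^d. -/

import Mathlib

/-! The Hessian is diagonal, because every training input is `±eᵢ`; its `(1,1)` entry carries
the curvature `σ(θ₁)σ(-θ₁)` twice, from `e₁` and from `-e₁`, and the normalisation `1/(d+1)`.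
Both gradients are `-σ(-θ₁)·e₁`, so the influence is
`-σ(-θ₁)² · (d+1) / (2σ(θ₁)σ(-θ₁)) = -((d+1)/2) · σ(-θ₁)/σ(θ₁)`, and
`σ(-t) = σ(t)·exp(-t)`. -/

open Matrix
noncomputable section

/-- The sigmoid function `σ(t) = 1/(1+exp(-t))`. -/
def sigmoid (t : ℝ) : ℝ := 1 / (1 + Real.exp (-t))

/-- A labeled sample `(x, y)` with `x ∈ ℝ^d` and label `y ∈ ℝ` (intended `y ∈ {1,-1}`). -/
abbrev Sample (d : ℕ) := (Fin d → ℝ) × ℝ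

/-- Gradient in `θ` of the logistic loss `L((x,y),θ) = log(1+exp(-y⟨x,θ⟩))`,
namely `-y·σ(-y⟨x,θ⟩)·x`. -/
def lossGrad {d : ℕ} (z : Sample d) (θ : Fin d → ℝ) : Fin d → ℝ :=
  (-z.2 * sigmoid (-(z.2 * (z.1 ⬝ᵥ θ)))) • z.1

/-- Empirical-loss Hessian `H_θ = (1/n)·Σ_i σ(⟨x_i,θ⟩)σ(-⟨x_i,θ⟩)·x_i x_iᵀ`. -/
def hess {d n : ℕ} (Ztrain : Fin n → Sample d) (θ : Fin d → ℝ) : Matrix (Fin d) (Fin d) ℝ :=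
  (n : ℝ)⁻¹ • ∑ i, (sigmoid ((Ztrain i).1 ⬝ᵥ θ) * sigmoid (-((Ztrain i).1 ⬝ᵥ θ))) •
    vecMulVec (Ztrain i).1 (Ztrain i).1

/-- Influence of a training sample `z` on a test set `Ztest`:
`I_θ(z, Ztest) = Σ_j -g_{ztest_j}(θ)ᵀ H_θ⁻¹ g_z(θ)`. -/
def influence {d n m : ℕ} (Ztrain : Fin n → Sample d) (θ : Fin d → ℝ)
    (z : Sample d) (Ztest : Fin m → Sample d) : ℝ :=
  ∑ j, -(lossGrad (Ztest j) θ ⬝ᵥ ((hess Ztrain θ)⁻¹ *ᵥ lossGrad z θ))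


/-- The concrete training family of size `d+1`: index `0` is the target `(e_1, 1)`,
indices `1,...,d-1` are `(e_i, y_i)`, and index `d` is `(-e_1, 1)`. -/
def trainFam (d : ℕ) (hd : 0 < d) (y : Fin d → ℝ) (i : Fin (d + 1)) : Sample d :=
  if h : (i : ℕ) < d then
    if _h0 : (i : ℕ) = 0 then (Pi.single (⟨0, hd⟩ : Fin d) 1, 1)
    else (Pi.single (⟨(i : ℕ), h⟩ : Fin d) 1, y ⟨(i : ℕ), h⟩)
  else (-Pi.single (⟨0, hd⟩ : Fin d) 1, 1)

/-- The concrete test set `Z_test = {(e_1, 1)}`. -/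
def testFam (d : ℕ) (hd : 0 < d) : Fin 1 → Sample d :=
  fun _ => (Pi.single (⟨0, hd⟩ : Fin d) 1, 1)

theorem sigmoid_eq_real_sigmoid : sigmoid = Real.sigmoid :=
  funext fun _ => one_div _

theorem sigmoid_pos (t : ℝ) : 0 < sigmoid t := by
  rw [sigmoid_eq_real_sigmoid]
  exact Real.sigmoid_pos t

theorem sigmoid_mul_exp_neg (t : ℝ) : sigmoid t * Real.exp (-t) = sigmoid (-t) := by
  rw [sigmoid_eq_real_sigmoid]
  exact Real.sigmoid_mul_rexp_neg t

/-- `σ(t)σ(-t) = σ'(t)`, the weight of `x xᵀ` in `hess`. -/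
def logisticWeight (t : ℝ) : ℝ := sigmoid t * sigmoid (-t)

theorem logisticWeight_pos (t : ℝ) : 0 < logisticWeight t :=
  mul_pos (sigmoid_pos t) (sigmoid_pos (-t))

theorem logisticWeight_neg (t : ℝ) : logisticWeight (-t) = logisticWeight t := by
  rw [logisticWeight, neg_neg, mul_comm, logisticWeight]

theorem hess_eq_smul_sum {d n : ℕ} (Z : Fin n → Sample d) (θ : Fin d → ℝ) :
    hess Z θ = (n : ℝ)⁻¹ • ∑ i, logisticWeight ((Z i).1 ⬝ᵥ θ) • vecMulVec (Z i).1 (Z i).1 :=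
  rfl

theorem logisticWeight_smul_vecMulVec_single {d : ℕ} (i : Fin d) (θ : Fin d → ℝ) :
    logisticWeight (Pi.single i 1 ⬝ᵥ θ) • vecMulVec (Pi.single i (1 : ℝ)) (Pi.single i 1) =
      single i i (logisticWeight (θ i)) := by
  rw [← single_eq_single_vecMulVec_single, smul_single, single_dotProduct, one_mul, smul_eq_mul,
    mul_one]

theorem lossGrad_single_one {d : ℕ} (i : Fin d) (θ : Fin d → ℝ) :
    lossGrad (Pi.single i 1, 1) θ = Pi.single i (-sigmoid (-θ i)) := by
  simp [lossGrad, single_dotProduct, ← Pi.single_smul, Pi.single_neg]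

theorem inv_diagonal_mulVec_single {n K : Type*} [Fintype n] [DecidableEq n] [Field K]
    {v : n → K} (hv : ∀ k, v k ≠ 0) (i : n) (x : K) :
    (diagonal v)⁻¹ *ᵥ Pi.single i x = Pi.single i (x / v i) := by
  have hinv : (diagonal v)⁻¹ = diagonal v⁻¹ := by
    refine inv_eq_right_inv ?_
    rw [diagonal_mul_diagonal, ← diagonal_one]
    exact congrArg diagonal (funext fun k => mul_inv_cancel₀ (hv k))
  rw [hinv, diagonal_mulVec_single, Pi.inv_apply, div_eq_inv_mul]

section trainFam

variable (d : ℕ) (hd : 0 < d) (y : Fin d → ℝ)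

theorem trainFam_zero : trainFam d hd y 0 = (Pi.single ⟨0, hd⟩ 1, 1) := by
  simp [trainFam, hd]

theorem trainFam_castSucc_fst (i : Fin d) : (trainFam d hd y i.castSucc).1 = Pi.single i 1 := by
  unfold trainFam
  split_ifs with hlt h0
  · rw [show i = ⟨0, hd⟩ from Fin.ext h0]
  · rfl
  · exact absurd i.isLt hlt

theorem trainFam_last : trainFam d hd y (Fin.last d) = (-Pi.single ⟨0, hd⟩ 1, 1) := by
  simp [trainFam]

theorem hess_trainFam (θ : Fin d → ℝ) :
    hess (trainFam d hd y) θ = diagonal (((d : ℝ) + 1)⁻¹ •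
      ((fun k => logisticWeight (θ k)) + Pi.single ⟨0, hd⟩ (logisticWeight (θ ⟨0, hd⟩)))) := by
  simp only [hess_eq_smul_sum, Fin.sum_univ_castSucc, trainFam_castSucc_fst, trainFam_last,
    neg_dotProduct, logisticWeight_neg, neg_vecMulVec, vecMulVec_neg, neg_neg,
    logisticWeight_smul_vecMulVec_single]
  rw [sum_single_eq_diagonal, ← diagonal_single, diagonal_add, diagonal_smul, Nat.cast_succ]
  rfl

end trainFam

theorem influence_trainFam_target (d : ℕ) (hd : 0 < d) (y θ : Fin d → ℝ) :
    influence (trainFam d hd y) θ (trainFam d hd y 0) (testFam d hd) =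
      -(((d : ℝ) + 1) / 2) * Real.exp (-θ ⟨0, hd⟩) := by
  have hdiag_ne : ∀ k, (((d : ℝ) + 1)⁻¹ • ((fun k => logisticWeight (θ k)) +
      Pi.single ⟨0, hd⟩ (logisticWeight (θ ⟨0, hd⟩))) : Fin d → ℝ) k ≠ 0 := fun k =>
    have hsingle : (0 : Fin d → ℝ) ≤ Pi.single ⟨0, hd⟩ (logisticWeight (θ ⟨0, hd⟩)) :=
      Pi.single_nonneg.2 (logisticWeight_pos _).le
    (mul_pos (by positivity) (add_pos_of_pos_of_nonneg (logisticWeight_pos _) (hsingle k))).ne'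
  rw [influence, Fin.sum_univ_one, trainFam_zero, testFam, lossGrad_single_one, hess_trainFam,
    inv_diagonal_mulVec_single hdiag_ne, single_dotProduct, Pi.single_eq_same]
  simp only [Pi.smul_apply, Pi.add_apply, Pi.single_eq_same, smul_eq_mul, logisticWeight]
  rw [← sigmoid_mul_exp_neg]
  have := sigmoid_pos (θ ⟨0, hd⟩)
  field_simp
  ring

/-- for every `θ`, the influence of the target sample `z_target = (e_1, 1)`
(on the test set `{(e_1,1)}`) equals `-((d+1)/2)·exp(-θ_1)`; in particular it is negative. -/
theorem influence_target_eq_neg (d : ℕ) (hd : 2 ≤ d) (y : Fin d → ℝ)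
    (θ : Fin d → ℝ) :
    influence (trainFam d (by omega) y) θ (trainFam d (by omega) y 0) (testFam d (by omega)) =
      -(((d : ℝ) + 1) / 2) * Real.exp (-θ ⟨0, by omega⟩) ∧
    influence (trainFam d (by omega) y) θ (trainFam d (by omega) y 0) (testFam d (by omega))
      < 0 := by
  have hval := influence_trainFam_target d (by omega) y θ
  refine ⟨hval, hval ▸ ?_⟩
  exact mul_neg_of_neg_of_pos (neg_neg_of_pos (by positivity)) (Real.exp_pos _)
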